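/- Let H ∈ ℂ^{N×K} with HᴴH invertible and let C ∈ ℂ^{K×K} be Hermitian positive definite. Then: (i) lim_{N₀→0⁺} (Hᴴ(HCHᴴ + N₀I)⁻¹H − C⁻¹)/N₀ = −C⁻¹(HᴴH)⁻¹C⁻¹; (ii) lim_{N₀→∞} N₀ · Hᴴ(HCHᴴ + N₀I)⁻¹ = Hᴴ (limits entrywise; for every N₀ > 0 the matrix HCHᴴ + N₀I is positive definite, hence invertible). -/

import Mathlib

open Matrix Filter
open scoped ComplexOrder Topology

/-!
Write `B = HᴴHC + N₀`. The push-through identity `Hᴴ (HCHᴴ + N₀)⁻¹ = B⁻¹ Hᴴ` together with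
`B⁻¹ HᴴHC = 1 - N₀ B⁻¹` gives `Hᴴ (HCHᴴ + N₀)⁻¹ H - C⁻¹ = -N₀ B⁻¹ C⁻¹`, and as `N₀ → 0⁺`,
`B⁻¹ → (HᴴHC)⁻¹ = C⁻¹ (HᴴH)⁻¹` by continuity of inversion at an invertible matrix.
At the other end, `N₀ (HCHᴴ + N₀)⁻¹ = (1 + HCHᴴ / N₀)⁻¹ → 1`.
-/

namespace Matrix

variable {m n α : Type*} [Fintype m] [Fintype n] [DecidableEq m] [DecidableEq n]

section Algebra

variable [CommRing α]

theorem mul_inv_add_smul_one_comm (X : Matrix n m α) (Y : Matrix m n α) (c : α)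
    (hXY : IsUnit (X * Y + c • 1).det) (hYX : IsUnit (Y * X + c • 1).det) :
    Y * (X * Y + c • 1)⁻¹ = (Y * X + c • 1)⁻¹ * Y := by
  have hcomm : (Y * X + c • 1) * Y = Y * (X * Y + c • 1) := by
    simp only [Matrix.add_mul, Matrix.mul_add, Matrix.smul_mul, Matrix.mul_smul,
      Matrix.one_mul, Matrix.mul_one, Matrix.mul_assoc]
  calc Y * (X * Y + c • 1)⁻¹
      = (Y * X + c • 1)⁻¹ * ((Y * X + c • 1) * Y) * (X * Y + c • 1)⁻¹ := by
        rw [nonsing_inv_mul_cancel_left _ _ hYX]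
    _ = (Y * X + c • 1)⁻¹ * Y := by
        rw [hcomm, Matrix.mul_assoc, Matrix.mul_assoc, mul_nonsing_inv _ hXY, Matrix.mul_one]

theorem inv_add_smul_one_mul_self (Z : Matrix n n α) (c : α) (hZ : IsUnit (Z + c • 1).det) :
    (Z + c • 1)⁻¹ * Z = 1 - c • (Z + c • 1)⁻¹ := by
  calc (Z + c • 1)⁻¹ * Z = (Z + c • 1)⁻¹ * ((Z + c • 1) - c • 1) := by rw [add_sub_cancel_right]
    _ = 1 - c • (Z + c • 1)⁻¹ := by
      rw [Matrix.mul_sub, nonsing_inv_mul _ hZ, Matrix.mul_smul, Matrix.mul_one]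

theorem mul_inv_add_smul_one_mul_sub_inv (G : Matrix m n α) (H : Matrix n m α)
    (C : Matrix m m α) (c : α) (hC : IsUnit C.det) (hM : IsUnit (H * C * G + c • 1).det)
    (hB : IsUnit (G * H * C + c • 1).det) :
    G * (H * C * G + c • 1)⁻¹ * H - C⁻¹ = -(c • ((G * H * C + c • 1)⁻¹ * C⁻¹)) := by
  rw [Matrix.mul_assoc G H C] at hB ⊢
  rw [mul_inv_add_smul_one_comm (H * C) G c hM hB]
  calc (G * (H * C) + c • 1)⁻¹ * G * H - C⁻¹
      = (G * (H * C) + c • 1)⁻¹ * (G * (H * C)) * C⁻¹ - C⁻¹ := by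
        rw [← Matrix.mul_assoc G H C, Matrix.mul_assoc _ (G * H * C),
          Matrix.mul_nonsing_inv_cancel_right _ _ hC, Matrix.mul_assoc, Matrix.mul_assoc]
    _ = -(c • ((G * (H * C) + c • 1)⁻¹ * C⁻¹)) := by
        rw [inv_add_smul_one_mul_self _ c hB, Matrix.sub_mul, Matrix.one_mul, Matrix.smul_mul]
        abel

end Algebra

section Topology

variable {𝕜 ι : Type*} [Field 𝕜] [TopologicalSpace 𝕜]
  {l : Filter ι} {f : ι → Matrix n n 𝕜} {A : Matrix n n 𝕜}

theorem _root_.Filter.Tendsto.matrix_inv [IsTopologicalDivisionRing 𝕜]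
    (hf : Tendsto f l (𝓝 A)) (hA : A.det ≠ 0) :
    Tendsto (fun x => (f x)⁻¹) l (𝓝 A⁻¹) := by
  refine (continuousAt_matrix_inv A ?_).tendsto.comp hf
  simpa only [Ring.inverse_eq_inv'] using continuousAt_inv₀ hA

theorem _root_.Filter.Tendsto.eventually_isUnit_det [IsTopologicalRing 𝕜] [T1Space 𝕜]
    (hf : Tendsto f l (𝓝 A)) (hA : A.det ≠ 0) :
    ∀ᶠ x in l, IsUnit (f x).det :=
  ((continuous_id.matrix_det.tendsto A).comp hf).eventually_ne hA |>.mono fun _ => Ne.isUnit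

end Topology

theorem tendsto_smul_inv_add_smul_one_atTop {𝕜 : Type*} [RCLike 𝕜] (Z : Matrix n n 𝕜) :
    Tendsto (fun t : ℝ => (t : 𝕜) • (Z + (t : 𝕜) • 1)⁻¹) atTop (𝓝 1) := by
  have hD : Tendsto (fun t : ℝ => (t : 𝕜)⁻¹ • Z + 1) atTop (𝓝 1) := by
    have hinv : Tendsto (fun t : ℝ => (t : 𝕜)⁻¹) atTop (𝓝 0) := by
      simpa [Function.comp_def] using
        ((RCLike.continuous_ofReal (K := 𝕜)).tendsto 0).comp tendsto_inv_atTop_zero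
    simpa using (hinv.smul_const Z).add_const 1
  have hdet : (1 : Matrix n n 𝕜).det ≠ 0 := by simp
  have hDinv := hD.matrix_inv hdet
  rw [inv_one] at hDinv
  refine hDinv.congr' ?_
  filter_upwards [hD.eventually_isUnit_det hdet, eventually_gt_atTop 0] with t hunit ht
  have ht' : (t : 𝕜) ≠ 0 := RCLike.ofReal_ne_zero.mpr ht.ne'
  have := invertibleOfNonzero ht'
  have hZ : Z + (t : 𝕜) • 1 = (t : 𝕜) • ((t : 𝕜)⁻¹ • Z + 1) := by
    rw [smul_add, smul_smul, mul_inv_cancel₀ ht', one_smul]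
  rw [hZ, Matrix.inv_smul (A := (t : 𝕜)⁻¹ • Z + 1) (t : 𝕜) hunit, smul_smul, mul_invOf_self,
    one_smul]

end Matrix

/-- Appendix K of the paper. For `HᴴH` invertible and `C` Hermitian
positive definite: (i) `(Hᴴ(HCHᴴ+N₀I)⁻¹H − C⁻¹)/N₀ → −C⁻¹(HᴴH)⁻¹C⁻¹` as `N₀ → 0⁺`;
(ii) `N₀ Hᴴ(HCHᴴ+N₀I)⁻¹ → Hᴴ` as `N₀ → ∞`; and `HCHᴴ + N₀I` is positive definite
(hence invertible) for every `N₀ > 0`. -/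
theorem lmmse_pic_snr_asymptotics {N K : ℕ}
    (H : Matrix (Fin N) (Fin K) ℂ) (hinv : IsUnit (Hᴴ * H))
    (C : Matrix (Fin K) (Fin K) ℂ) (hC : C.PosDef) :
    (∀ N₀ : ℝ, 0 < N₀ → (H * C * Hᴴ + (N₀ : ℂ) • 1).PosDef) ∧
      Tendsto (fun N₀ : ℝ =>
          (N₀ : ℂ)⁻¹ • (Hᴴ * (H * C * Hᴴ + (N₀ : ℂ) • 1)⁻¹ * H - C⁻¹))
        (𝓝[>] (0 : ℝ)) (𝓝 (-(C⁻¹ * (Hᴴ * H)⁻¹ * C⁻¹))) ∧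
      Tendsto (fun N₀ : ℝ => (N₀ : ℂ) • (Hᴴ * (H * C * Hᴴ + (N₀ : ℂ) • 1)⁻¹))
        atTop (𝓝 Hᴴ) := by
  have hM : ∀ N₀ : ℝ, 0 < N₀ → (H * C * Hᴴ + (N₀ : ℂ) • 1).PosDef := fun N₀ h =>
    PosDef.posSemidef_add (hC.posSemidef.mul_mul_conjTranspose_same H)
      (PosDef.one.smul (Complex.zero_lt_real.mpr h))
  refine ⟨hM, ?_, ?_⟩
  · have hCdet : IsUnit C.det := (isUnit_iff_isUnit_det C).1 hC.isUnit
    have hdet : (Hᴴ * H * C).det ≠ 0 := by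
      rw [det_mul]
      exact mul_ne_zero ((isUnit_iff_isUnit_det _).1 hinv).ne_zero hCdet.ne_zero
    have hB : Tendsto (fun N₀ : ℝ => Hᴴ * H * C + (N₀ : ℂ) • 1) (𝓝[>] 0)
        (𝓝 (Hᴴ * H * C)) := by
      have hcont : Continuous fun N₀ : ℝ => Hᴴ * H * C + (N₀ : ℂ) • 1 := by fun_prop
      simpa using (hcont.tendsto 0).mono_left nhdsWithin_le_nhds
    have hlim := ((hB.matrix_inv hdet).mul_const C⁻¹).neg
    rw [Matrix.mul_inv_rev] at hlim
    refine hlim.congr' ?_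
    filter_upwards [hB.eventually_isUnit_det hdet, self_mem_nhdsWithin] with N₀ hBunit hpos
    have hN₀ : (N₀ : ℂ) ≠ 0 := Complex.ofReal_ne_zero.mpr (ne_of_gt hpos)
    rw [mul_inv_add_smul_one_mul_sub_inv Hᴴ H C _ hCdet
      ((isUnit_iff_isUnit_det _).1 (hM N₀ hpos).isUnit) hBunit,
      smul_neg, smul_smul, inv_mul_cancel₀ hN₀, one_smul]
  · have hmul : Continuous fun X : Matrix (Fin N) (Fin N) ℂ => Hᴴ * X :=
      continuous_const.matrix_mul continuous_id
    simpa [Function.comp_def, Matrix.mul_smul] using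
      (hmul.tendsto 1).comp (tendsto_smul_inv_add_smul_one_atTop (H * C * Hᴴ))
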